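/- arXiv:2403.19089 — 3 statements merged into one kernel-verified Lean document; each statement's English description precedes it below -/
import Mathlib

section
/- For 0 < α ≤ 1, the integral Ψ(α) = ∫₀¹ ∫_{-∞}^∞ ∫_{-∞}^∞ exp(-(r² + r'² - 2rr't α)/2) dr dr' dt equals 2π · arcsin(α)/α, and hence Ψ(α) ≤ π². Consequently the function ψ_2(α) = ∫₀¹ ∫₀^∞ ∫₀^∞ exp(-(r² + r'² - 2rr't α)/2) dr dr' dt satisfies ψ_2(α) ≤ π² for all α ∈ [-1,1]. -/
/-!
Completing the square in `r'` turns the inner integral into a Gaussian integral equal to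
`√(2π) exp(-(1 - s²) r² / 2)` with `s = tα`, and a second Gaussian integral gives
`2π / √(1 - s²)`. Integrating in `t` and substituting `x = tα` leaves
`∫₀^α dx / √(1 - x²) = arcsin α`. The bound `arcsin α ≤ πα/2` is Jordan's inequality
`α ≤ sin (πα/2)`. On the quadrant `r, r' > 0` the integrand of `ψ₂` increases with `α`, so
`ψ₂(α) ≤ Ψ(1) = π²`.
-/

open MeasureTheory Real

/-- `Ψ(α)`: the triple integral with `r, r'` ranging over all of `ℝ`. -/
noncomputable def bigPsi (α : ℝ) : ℝ :=
  ∫ t in Set.Ioo (0 : ℝ) 1,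
    ∫ r : ℝ, ∫ r' : ℝ, Real.exp (-(r ^ 2 + r' ^ 2 - 2 * r * r' * t * α) / 2)

/-- `ψ₂(α)`: the triple integral with `r, r'` ranging over `(0,∞)`. -/
noncomputable def psiTwo (α : ℝ) : ℝ :=
  ∫ t in Set.Ioo (0 : ℝ) 1,
    ∫ r in Set.Ioi (0 : ℝ), ∫ r' in Set.Ioi (0 : ℝ),
      Real.exp (-(r ^ 2 + r' ^ 2 - 2 * r * r' * t * α) / 2)

open Set

section BivariateGaussian

variable (s : ℝ)

theorem exp_bivariate_eq_mul (r r' : ℝ) :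
    exp (-(r ^ 2 + r' ^ 2 - 2 * r * r' * s) / 2) =
      exp (-(1 / 2) * (r' - r * s) ^ 2) * exp (-((1 - s ^ 2) / 2) * r ^ 2) := by
  rw [← exp_add]; ring_nf

theorem integrable_exp_bivariate (r : ℝ) :
    Integrable fun r' : ℝ => exp (-(r ^ 2 + r' ^ 2 - 2 * r * r' * s) / 2) := by
  simp_rw [exp_bivariate_eq_mul s r]
  exact ((integrable_exp_neg_mul_sq one_half_pos).comp_sub_right (r * s)).mul_const _

theorem integral_exp_bivariate (r : ℝ) :
    ∫ r' : ℝ, exp (-(r ^ 2 + r' ^ 2 - 2 * r * r' * s) / 2) =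
      √(2 * π) * exp (-((1 - s ^ 2) / 2) * r ^ 2) := by
  simp_rw [exp_bivariate_eq_mul s r]
  rw [integral_mul_const, integral_sub_right_eq_self (fun x => exp (-(1 / 2) * x ^ 2)),
    integral_gaussian]
  ring_nf

variable {s}

theorem integrable_integral_exp_bivariate (hs : s ^ 2 < 1) :
    Integrable fun r : ℝ => ∫ r' : ℝ, exp (-(r ^ 2 + r' ^ 2 - 2 * r * r' * s) / 2) := by
  simp_rw [integral_exp_bivariate]
  exact (integrable_exp_neg_mul_sq (by linarith)).const_mul _

theorem integral_integral_exp_bivariate (hs : s ^ 2 < 1) :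
    ∫ r : ℝ, ∫ r' : ℝ, exp (-(r ^ 2 + r' ^ 2 - 2 * r * r' * s) / 2) = 2 * π / √(1 - s ^ 2) := by
  have h : 0 < 1 - s ^ 2 := by linarith
  simp_rw [integral_exp_bivariate]
  rw [integral_const_mul, integral_gaussian, ← sqrt_mul (by positivity),
    show 2 * π * (π / ((1 - s ^ 2) / 2)) = (2 * π) ^ 2 / (1 - s ^ 2) by field_simp,
    sqrt_div' _ h.le, sqrt_sq (by positivity)]

end BivariateGaussian

section Arcsin

variable {a b : ℝ}

theorem intervalIntegrable_one_div_sqrt_one_sub_sq (ha : a ∈ Icc (-1) 1) (hb : b ∈ Icc (-1) 1) :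
    IntervalIntegrable (fun x => 1 / √(1 - x ^ 2)) volume a b := by
  refine intervalIntegral.intervalIntegrable_deriv_of_nonneg continuous_arcsin.continuousOn
    (fun x hx => ?_) (fun x _ => by positivity)
  have hx' : x ∈ Ioo (-1) 1 := Ioo_subset_Ioo (le_min ha.1 hb.1) (max_le ha.2 hb.2) hx
  exact hasDerivAt_arcsin hx'.1.ne' hx'.2.ne

theorem integral_one_div_sqrt_one_sub_sq (ha : a ∈ Icc (-1) 1) (hb : b ∈ Icc (-1) 1) :
    ∫ x in a..b, 1 / √(1 - x ^ 2) = arcsin b - arcsin a := by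
  refine intervalIntegral.integral_eq_sub_of_hasDeriv_right continuous_arcsin.continuousOn
    (fun x hx => ?_) (intervalIntegrable_one_div_sqrt_one_sub_sq ha hb)
  have hx' : x ∈ Ioo (-1) 1 := Ioo_subset_Ioo (le_min ha.1 hb.1) (max_le ha.2 hb.2) hx
  exact (hasDerivAt_arcsin hx'.1.ne' hx'.2.ne).hasDerivWithinAt

theorem integral_one_div_sqrt_one_sub_mul_sq {c : ℝ} (hc₀ : c ≠ 0) (hc : c ∈ Icc (-1) 1) :
    ∫ t in (0 : ℝ)..1, 1 / √(1 - (t * c) ^ 2) = arcsin c / c := by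
  rw [intervalIntegral.integral_comp_mul_right (fun x => 1 / √(1 - x ^ 2)) hc₀, zero_mul, one_mul,
    integral_one_div_sqrt_one_sub_sq ⟨by norm_num, by norm_num⟩ hc, arcsin_zero, sub_zero,
    smul_eq_mul, inv_mul_eq_div]

theorem arcsin_le_pi_div_two_mul {x : ℝ} (hx₀ : 0 ≤ x) (hx₁ : x ≤ 1) : arcsin x ≤ π / 2 * x := by
  rw [arcsin_le_iff_le_sin ⟨by linarith, hx₁⟩ ⟨by nlinarith [pi_pos], by nlinarith [pi_pos]⟩]
  exact le_sin_mul hx₀ hx₁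

end Arcsin

theorem setIntegral_le_integral_of_le {X : Type*} [MeasurableSpace X] {μ : Measure X}
    {f g : X → ℝ} {s : Set X} (hs : MeasurableSet s) (hf : ∀ x ∈ s, 0 ≤ f x)
    (hfg : ∀ x ∈ s, f x ≤ g x) (hg : Integrable g μ) (hg₀ : 0 ≤ g) :
    ∫ x in s, f x ∂μ ≤ ∫ x, g x ∂μ :=
  calc ∫ x in s, f x ∂μ ≤ ∫ x in s, g x ∂μ :=
        integral_mono_of_nonneg ((ae_restrict_iff' hs).2 (ae_of_all _ hf)) hg.integrableOn
          ((ae_restrict_iff' hs).2 (ae_of_all _ hfg))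
    _ ≤ ∫ x, g x ∂μ := setIntegral_le_integral hg (ae_of_all _ hg₀)

section BivariateGaussianQuadrant

variable {s α : ℝ}

theorem integral_Ioi_exp_bivariate_le (hs : 0 ≤ s) (hα : α ≤ 1) {r : ℝ} (hr : 0 ≤ r) :
    ∫ r' in Ioi 0, exp (-(r ^ 2 + r' ^ 2 - 2 * r * r' * s * α) / 2) ≤
      ∫ r' : ℝ, exp (-(r ^ 2 + r' ^ 2 - 2 * r * r' * s) / 2) :=
  setIntegral_le_integral_of_le measurableSet_Ioi (fun _ _ => (exp_pos _).le)
    (fun r' hr' => exp_le_exp.2 (by nlinarith [mul_nonneg (mul_nonneg hr (le_of_lt hr')) hs]))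
    (integrable_exp_bivariate s r) (fun _ => (exp_pos _).le)

theorem integral_Ioi_integral_Ioi_exp_bivariate_le (hs₀ : 0 ≤ s) (hs₁ : s ^ 2 < 1) (hα : α ≤ 1) :
    ∫ r in Ioi 0, ∫ r' in Ioi 0, exp (-(r ^ 2 + r' ^ 2 - 2 * r * r' * s * α) / 2) ≤
      2 * π / √(1 - s ^ 2) := by
  rw [← integral_integral_exp_bivariate hs₁]
  exact setIntegral_le_integral_of_le measurableSet_Ioi
    (fun _ _ => setIntegral_nonneg measurableSet_Ioi fun _ _ => (exp_pos _).le)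
    (fun r hr => integral_Ioi_exp_bivariate_le hs₀ hα (le_of_lt hr))
    (integrable_integral_exp_bivariate hs₁) (fun _ => integral_nonneg fun _ => (exp_pos _).le)

end BivariateGaussianQuadrant

section Psi

variable {α : ℝ}

theorem bigPsi_eq_setIntegral (hα : α ∈ Icc (-1) 1) :
    bigPsi α = ∫ t in Ioo (0 : ℝ) 1, 2 * π * (1 / √(1 - (t * α) ^ 2)) := by
  refine setIntegral_congr_fun measurableSet_Ioo fun t ht => ?_
  have hs : (t * α) ^ 2 < 1 := by
    have ht₁ : t ^ 2 < 1 := by nlinarith [ht.1, ht.2]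
    have hα₁ : α ^ 2 ≤ 1 := by nlinarith [hα.1, hα.2]
    rw [mul_pow]
    nlinarith [sq_nonneg t]
  simp_rw [mul_assoc _ t α]
  rw [integral_integral_exp_bivariate hs, mul_one_div]

theorem bigPsi_eq (hα₀ : α ≠ 0) (hα : α ∈ Icc (-1) 1) : bigPsi α = 2 * π * arcsin α / α := by
  rw [bigPsi_eq_setIntegral hα, integral_const_mul, ← integral_Ioc_eq_integral_Ioo,
    ← intervalIntegral.integral_of_le zero_le_one, integral_one_div_sqrt_one_sub_mul_sq hα₀ hα,
    mul_div_assoc]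

theorem bigPsi_le (hα₀ : 0 < α) (hα₁ : α ≤ 1) : bigPsi α ≤ π ^ 2 := by
  rw [bigPsi_eq hα₀.ne' ⟨by linarith, hα₁⟩, div_le_iff₀ hα₀]
  nlinarith [arcsin_le_pi_div_two_mul hα₀.le hα₁, pi_pos]

theorem psiTwo_le_bigPsi_one (hα : α ≤ 1) : psiTwo α ≤ bigPsi 1 := by
  rw [bigPsi_eq_setIntegral ⟨by norm_num, le_rfl⟩]
  simp only [mul_one]
  have hint : IntegrableOn (fun t => 2 * π * (1 / √(1 - t ^ 2))) (Ioo 0 1) :=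
    ((intervalIntegrable_one_div_sqrt_one_sub_sq ⟨by norm_num, by norm_num⟩
      ⟨by norm_num, le_rfl⟩).1.mono_set Ioo_subset_Ioc_self).const_mul (2 * π)
  refine integral_mono_of_nonneg (ae_of_all _ fun t => setIntegral_nonneg measurableSet_Ioi
    fun _ _ => setIntegral_nonneg measurableSet_Ioi fun _ _ => (exp_pos _).le) hint ?_
  filter_upwards [ae_restrict_mem measurableSet_Ioo] with t ht
  rw [mul_one_div]
  exact integral_Ioi_integral_Ioi_exp_bivariate_le ht.1.le (by nlinarith [ht.1, ht.2]) hα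

end Psi

/-- `Ψ(α) = 2π arcsin(α)/α ≤ π²` for `0 < α ≤ 1`, and hence `ψ₂ ≤ π²` on `[-1,1]`. -/
theorem statement4 :
    (∀ α : ℝ, 0 < α → α ≤ 1 →
      bigPsi α = 2 * π * Real.arcsin α / α ∧ bigPsi α ≤ π ^ 2) ∧
    (∀ α ∈ Set.Icc (-1 : ℝ) 1, psiTwo α ≤ π ^ 2) :=
  ⟨fun _ hα₀ hα₁ => ⟨bigPsi_eq hα₀.ne' ⟨by linarith, hα₁⟩, bigPsi_le hα₀ hα₁⟩,
    fun _ hα => (psiTwo_le_bigPsi_one hα.2).trans (bigPsi_le one_pos le_rfl)⟩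
end

section
/- Let n ≥ 2 and let u : ℝⁿ\{0} → ℝ be a twice continuously differentiable 0-homogeneous function. Then for every unit vector θ ∈ S^{n-1} and for all h ∈ ℝⁿ, ⟨u''(θ)h, h⟩ = ⟨P_{θ⊥} u''(θ) P_{θ⊥} h, h⟩ - 2 ⟨∇u(θ), h⟩ ⟨θ, h⟩, where u''(θ) is the Hessian matrix of u at θ and P_{θ⊥} = I_n - θθᵀ is the orthogonal projection onto the hyperplane orthogonal to θ. Equivalently, as matrices, u''(θ) = P_{θ⊥} u''(θ) P_{θ⊥} - 2 (∇u(θ) ⊗ θ), where v ⊗ w denotes the symmetrized tensor product with entries (v ⊗ w)_{ij} = (v_i w_j + w_i v_j)/2. -/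
open MeasureTheory Real
open scoped RealInnerProductSpace

/-!
Differentiating `u (r • x) = u x` in `r` at `r = 1` gives Euler's identity `u'(x) x = 0`, and
differentiating the consequence `u'(r • x) = r⁻¹ • u'(x)` gives `u''(x) x = -u'(x)`. Writing
`h = w + t • x` with `w = h - t • x` and expanding the symmetric form `u''(x)` then yields
`u''(x) h h = u''(x) w w - 2 t u'(x) h` for every scalar `t`, in particular for `t = ⟪θ, h⟫`.
-/

open Filter Topology

section

variable {E F G : Type*} [NormedAddCommGroup E] [NormedSpace ℝ E]
  [NormedAddCommGroup F] [NormedSpace ℝ F] [NormedAddCommGroup G] [NormedSpace ℝ G]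

def ZeroHomogeneous (u : E → F) : Prop :=
  ∀ r : ℝ, 0 < r → ∀ x : E, x ≠ 0 → u (r • x) = u x

theorem fderiv_apply_self_eq_of_eventually_smul {g : E → G} {x : E}
    (hg : DifferentiableAt ℝ g x) {φ : ℝ → G} {φ' : G} (hφ : HasDerivAt φ φ' 1)
    (hgφ : ∀ᶠ r in 𝓝 1, g (r • x) = φ r) : fderiv ℝ g x x = φ' := by
  have hray : HasDerivAt (fun r : ℝ => r • x) x 1 := by
    simpa using (hasDerivAt_id (1 : ℝ)).smul_const x
  have hcomp : HasDerivAt (fun r : ℝ => g (r • x)) (fderiv ℝ g x x) 1 := by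
    refine HasFDerivAt.comp_hasDerivAt (l := g) 1 ?_ hray
    rw [one_smul]
    exact hg.hasFDerivAt
  exact hcomp.unique (hφ.congr_of_eventuallyEq hgφ)

namespace ZeroHomogeneous

variable {u : E → F} {x : E}

theorem fderiv_smul (hu : ZeroHomogeneous u) {r : ℝ} (hr : 0 < r) (hx : x ≠ 0) :
    fderiv ℝ u (r • x) = r⁻¹ • fderiv ℝ u x := by
  have hloc : (fun y => u (r • y)) =ᶠ[𝓝 x] u := by
    filter_upwards [isOpen_compl_singleton.mem_nhds hx] with y hy
    exact hu r hr y hy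
  rw [← hloc.fderiv_eq, fderiv_comp_smul, smul_smul, inv_mul_cancel₀ hr.ne', one_smul]

theorem fderiv_apply_self (hu : ZeroHomogeneous u) (hx : x ≠ 0)
    (hd : DifferentiableAt ℝ u x) : fderiv ℝ u x x = 0 :=
  fderiv_apply_self_eq_of_eventually_smul hd (hasDerivAt_const 1 (u x)) <|
    (eventually_gt_nhds one_pos).mono fun r hr => hu r hr x hx

theorem fderiv_fderiv_apply_self (hu : ZeroHomogeneous u) (hx : x ≠ 0)
    (hd : DifferentiableAt ℝ (fderiv ℝ u) x) : fderiv ℝ (fderiv ℝ u) x x = -fderiv ℝ u x := by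
  have hinv : HasDerivAt (fun r : ℝ => r⁻¹ • fderiv ℝ u x) (-fderiv ℝ u x) 1 := by
    simpa using (hasDerivAt_inv (one_ne_zero (α := ℝ))).smul_const (fderiv ℝ u x)
  exact fderiv_apply_self_eq_of_eventually_smul hd hinv <|
    (eventually_gt_nhds one_pos).mono fun r hr => hu.fderiv_smul hr hx

theorem fderiv_fderiv_apply_apply (hu : ZeroHomogeneous u) (hx : x ≠ 0)
    (hc : ContDiffAt ℝ 2 u x) (t : ℝ) (h : E) :
    fderiv ℝ (fderiv ℝ u) x h h =
      fderiv ℝ (fderiv ℝ u) x (h - t • x) (h - t • x) - (2 * t) • fderiv ℝ u x h := by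
  set B := fderiv ℝ (fderiv ℝ u) x
  set L := fderiv ℝ u x
  set w := h - t • x
  have hBx : B x = -L :=
    hu.fderiv_fderiv_apply_self hx ((hc.fderiv_right le_rfl).differentiableAt one_ne_zero)
  have hLx : L x = 0 := hu.fderiv_apply_self hx (hc.differentiableAt two_ne_zero)
  have hsymm : B w x = B x w := (hc.isSymmSndFDerivAt (by simp)).eq w x
  have hLw : L w = L h := by simp [w, hLx]
  have hh : h = w + t • x := by simp [w]
  rw [hh]
  simp only [map_add, map_smul, add_apply, smul_apply, neg_apply, hsymm, hBx, hLx, hLw]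
  module

end ZeroHomogeneous

end

theorem statement10_general (n : ℕ) (u : EuclideanSpace ℝ (Fin n) → ℝ)
    (hu : ContDiffOn ℝ 2 u {(0 : EuclideanSpace ℝ (Fin n))}ᶜ)
    (huh : ∀ r : ℝ, 0 < r → ∀ x : EuclideanSpace ℝ (Fin n), x ≠ 0 → u (r • x) = u x)
    (θ : EuclideanSpace ℝ (Fin n)) (hθ : ‖θ‖ = 1) (h : EuclideanSpace ℝ (Fin n)) :
    (fderiv ℝ (fderiv ℝ u) θ h) h =
      (fderiv ℝ (fderiv ℝ u) θ (h - ⟪θ, h⟫ • θ)) (h - ⟪θ, h⟫ • θ) -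
        2 * fderiv ℝ u θ h * ⟪θ, h⟫ := by
  have hθ0 : θ ≠ 0 := by
    rintro rfl
    simp at hθ
  have hc : ContDiffAt ℝ 2 u θ := hu.contDiffAt (isOpen_compl_singleton.mem_nhds hθ0)
  rw [ZeroHomogeneous.fderiv_fderiv_apply_apply huh hθ0 hc ⟪θ, h⟫ h, smul_eq_mul]
  ring

/-- For a `C²` 0-homogeneous function `u` on `ℝⁿ\{0}`, the Hessian quadratic form
at a unit vector `θ` satisfies
`⟨u''(θ)h, h⟩ = ⟨P_{θ⊥} u''(θ) P_{θ⊥} h, h⟩ - 2⟨∇u(θ), h⟩⟨θ, h⟩`,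
where `P_{θ⊥} h = h - ⟨θ, h⟩θ` is the projection onto the hyperplane orthogonal
to `θ`.  (Equivalently, as matrices, `u'' = P u'' P - 2 ∇u ⊗ θ`.) -/
theorem statement10 (n : ℕ) (hn : 2 ≤ n) (u : EuclideanSpace ℝ (Fin n) → ℝ)
    (hu : ContDiffOn ℝ 2 u {(0 : EuclideanSpace ℝ (Fin n))}ᶜ)
    (huh : ∀ r : ℝ, 0 < r → ∀ x : EuclideanSpace ℝ (Fin n), x ≠ 0 → u (r • x) = u x)
    (θ : EuclideanSpace ℝ (Fin n)) (hθ : ‖θ‖ = 1) (h : EuclideanSpace ℝ (Fin n)) :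
    (fderiv ℝ (fderiv ℝ u) θ h) h =
      (fderiv ℝ (fderiv ℝ u) θ (h - ⟪θ, h⟫ • θ)) (h - ⟪θ, h⟫ • θ) -
        2 * fderiv ℝ u θ h * ⟪θ, h⟫ :=
  statement10_general n u hu huh θ hθ h
end

section
/- Let μ be a Borel probability measure on ℝ with distribution function F(x) = μ((-∞, x]), and define the Höffding kernel H(x,y) = F(min(x,y))·(1 - F(max(x,y))) for x, y ∈ ℝ. Then for all continuously differentiable functions u, v : ℝ → ℝ whose derivatives are compactly supported, u and v are square-integrable with respect to μ and cov_μ(u,v) = ∫_{ℝ}∫_{ℝ} u'(x) v'(y) H(x,y) dx dy. -/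
/-!
Let `c` be the limit of `u` at `+∞`, so that `c - u t = ∫_{[t,∞)} u'`, and likewise `d` for `v`;
the covariance is unchanged by `u ↦ c - u`, `v ↦ d - v`. By Fubini,
`E[c - u] = ∫ u'(x) F(x) dx`, and since the product of the two tail integrals is the integral
of `u'(x) v'(y)` over `{t ≤ x ∧ y}`, `E[(c - u)(d - v)] = ∫∫ u'(x) v'(y) F(x ∧ y) dx dy`.
The formula follows from `F(x ∧ y)(1 - F(x ∨ y)) = F(x ∧ y) - F(x) F(y)`.
-/

open MeasureTheory Set Filter Topology ProbabilityTheory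

noncomputable def hoeffdingKernel (μ : Measure ℝ) (x y : ℝ) : ℝ :=
  μ.real (Iic (min x y)) * (1 - μ.real (Iic (max x y)))

lemma hoeffdingKernel_eq (μ : Measure ℝ) (x y : ℝ) :
    hoeffdingKernel μ x y = μ.real (Iic (min x y)) - μ.real (Iic x) * μ.real (Iic y) := by
  rcases le_total x y with h | h <;>
    simp only [hoeffdingKernel, h, min_eq_left, max_eq_right, min_eq_right, max_eq_left] <;> ring

lemma measurable_measureReal_Iic (μ : Measure ℝ) [IsFiniteMeasure μ] :
    Measurable fun x => μ.real (Iic x) :=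
  Monotone.measurable fun _ _ hab => measureReal_mono (Iic_subset_Iic.2 hab)

section Tail

variable {w : ℝ → ℝ}

lemma exists_tendsto_atTop_of_hasCompactSupport_deriv (hw : Differentiable ℝ w)
    (hw' : HasCompactSupport (deriv w)) : ∃ c, Tendsto w atTop (𝓝 c) := by
  obtain ⟨R, -, hR⟩ := hw'.exists_pos_le_norm
  obtain ⟨c, hc⟩ := isOpen_Ioi.exists_is_const_of_deriv_eq_zero isPreconnected_Ioi
    hw.differentiableOn fun x (hx : R < x) => hR x (hx.le.trans (le_abs_self x))
  exact ⟨c, tendsto_const_nhds.congr' ((eventually_gt_atTop R).mono fun x hx => (hc x hx).symm)⟩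

lemma integrable_deriv_of_hasCompactSupport (hw : ContDiff ℝ 1 w)
    (hw' : HasCompactSupport (deriv w)) : Integrable (deriv w) :=
  (hw.continuous_deriv le_rfl).integrable_of_hasCompactSupport hw'

lemma exists_sub_eq_setIntegral_Ici_deriv (hw : ContDiff ℝ 1 w)
    (hw' : HasCompactSupport (deriv w)) : ∃ c, ∀ t, c - w t = ∫ x in Ici t, deriv w x := by
  have hd := hw.differentiable one_ne_zero
  obtain ⟨c, hc⟩ := exists_tendsto_atTop_of_hasCompactSupport_deriv hd hw'
  refine ⟨c, fun t => ?_⟩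
  rw [integral_Ici_eq_integral_Ioi, integral_Ioi_of_hasDerivAt_of_tendsto'
    (fun x _ => (hd x).hasDerivAt) (integrable_deriv_of_hasCompactSupport hw hw').integrableOn hc]

lemma memLp_of_hasCompactSupport_deriv (hw : ContDiff ℝ 1 w)
    (hw' : HasCompactSupport (deriv w)) (μ : Measure ℝ) [IsFiniteMeasure μ] (p : ENNReal) :
    MemLp w p μ := by
  obtain ⟨c, hc⟩ := exists_sub_eq_setIntegral_Ici_deriv hw hw'
  refine MemLp.of_bound hw.continuous.aestronglyMeasurable (‖c‖ + ∫ x, ‖deriv w x‖)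
    (ae_of_all _ fun t => ?_)
  have hint := (integrable_deriv_of_hasCompactSupport hw hw').norm
  calc ‖w t‖ = ‖c - ∫ x in Ici t, deriv w x‖ := by rw [← hc, sub_sub_cancel]
    _ ≤ ‖c‖ + ∫ x in Ici t, ‖deriv w x‖ :=
        (norm_sub_le _ _).trans (add_le_add le_rfl (norm_integral_le_integral_norm _))
    _ ≤ ‖c‖ + ∫ x, ‖deriv w x‖ :=
        add_le_add le_rfl (setIntegral_le_integral hint (ae_of_all _ fun _ => norm_nonneg _))

end Tail

section Fubini

variable {α : Type*} [MeasurableSpace α] {ν : Measure α} (μ : Measure ℝ) [IsFiniteMeasure μ]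
  {f : α → ℝ} {φ : α → ℝ}

lemma MeasureTheory.Integrable.mul_measureReal_Iic (hf : Integrable f ν) (hφ : Measurable φ) :
    Integrable (fun p => f p * μ.real (Iic (φ p))) ν :=
  hf.mul_bdd ((measurable_measureReal_Iic μ).comp hφ).aestronglyMeasurable
    (ae_of_all _ fun p => by
      rw [Real.norm_of_nonneg measureReal_nonneg]; exact measureReal_mono (subset_univ _))

lemma integral_setIntegral_setOf_le [SFinite ν] (hf : Integrable f ν) (hφ : Measurable φ) :
    ∫ t, ∫ p in {p | t ≤ φ p}, f p ∂ν ∂μ = ∫ p, f p * μ.real (Iic (φ p)) ∂ν := by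
  set S : Set (ℝ × α) := {q | q.1 ≤ φ q.2}
  have hS : MeasurableSet S := measurableSet_le measurable_fst (hφ.comp measurable_snd)
  calc ∫ t, ∫ p in {p | t ≤ φ p}, f p ∂ν ∂μ
      = ∫ t, ∫ p, S.indicator (fun q => f q.2) (t, p) ∂ν ∂μ := by
        congr with t
        rw [← integral_indicator (measurableSet_le measurable_const hφ)]
        rfl
    _ = ∫ p, ∫ t, S.indicator (fun q => f q.2) (t, p) ∂μ ∂ν :=
        integral_integral_swap ((hf.comp_snd μ).indicator hS)
    _ = ∫ p, f p * μ.real (Iic (φ p)) ∂ν := by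
        congr with p
        change ∫ t, (Iic (φ p)).indicator (fun _ => f p) t ∂μ = _
        rw [integral_indicator_const _ measurableSet_Iic, smul_eq_mul, mul_comm]

lemma integral_setIntegral_Ici {f : ℝ → ℝ} (hf : Integrable f) :
    ∫ t, (∫ x in Ici t, f x) ∂μ = ∫ x, f x * μ.real (Iic x) := by
  simpa only [Ici_def] using integral_setIntegral_setOf_le μ hf measurable_id'

lemma integral_setIntegral_Ici_mul_setIntegral_Ici {f g : ℝ → ℝ} (hf : Integrable f)
    (hg : Integrable g) :
    ∫ t, (∫ x in Ici t, f x) * (∫ y in Ici t, g y) ∂μ =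
      ∫ p : ℝ × ℝ, f p.1 * g p.2 * μ.real (Iic (min p.1 p.2)) := by
  have hprod : ∀ t, (∫ x in Ici t, f x) * (∫ y in Ici t, g y) =
      ∫ p in {p : ℝ × ℝ | t ≤ min p.1 p.2}, f p.1 * g p.2 := by
    intro t
    rw [← setIntegral_prod_mul, Measure.volume_eq_prod]
    congr
    ext p
    simp [Prod.le_def]
  simp_rw [hprod]
  exact integral_setIntegral_setOf_le μ (hf.mul_prod hg) (measurable_fst.min measurable_snd)

end Fubini

theorem covariance_eq_integral_integral_hoeffdingKernel (μ : Measure ℝ)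
    [IsProbabilityMeasure μ] {u v : ℝ → ℝ} (hu : ContDiff ℝ 1 u) (hv : ContDiff ℝ 1 v)
    (hu' : HasCompactSupport (deriv u)) (hv' : HasCompactSupport (deriv v)) :
    cov[u, v; μ] = ∫ x, ∫ y, deriv u x * deriv v y * hoeffdingKernel μ x y := by
  obtain ⟨c, hc⟩ := exists_sub_eq_setIntegral_Ici_deriv hu hu'
  obtain ⟨d, hd⟩ := exists_sub_eq_setIntegral_Ici_deriv hv hv'
  have hu₂ := memLp_of_hasCompactSupport_deriv hu hu' μ 2
  have hv₂ := memLp_of_hasCompactSupport_deriv hv hv' μ 2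
  have hu₁ := integrable_deriv_of_hasCompactSupport hu hu'
  have hv₁ := integrable_deriv_of_hasCompactSupport hv hv'
  have hmin := (hu₁.mul_prod hv₁).mul_measureReal_Iic μ (measurable_fst.min measurable_snd)
  have hprod := (hu₁.mul_measureReal_Iic μ measurable_id').mul_prod
    (hv₁.mul_measureReal_Iic μ measurable_id')
  have hkernel : ∀ p : ℝ × ℝ, deriv u p.1 * deriv v p.2 * hoeffdingKernel μ p.1 p.2 =
      deriv u p.1 * deriv v p.2 * μ.real (Iic (min p.1 p.2)) -
        deriv u p.1 * μ.real (Iic p.1) * (deriv v p.2 * μ.real (Iic p.2)) := fun p => by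
    rw [hoeffdingKernel_eq]; ring
  calc cov[u, v; μ] = cov[fun t => c - u t, fun t => d - v t; μ] := by
        rw [covariance_const_sub_left (hu₂.integrable one_le_two),
          covariance_const_sub_right (hv₂.integrable one_le_two), neg_neg]
    _ = (∫ t, (∫ x in Ici t, deriv u x) * (∫ y in Ici t, deriv v y) ∂μ) -
          (∫ t, (∫ x in Ici t, deriv u x) ∂μ) * (∫ t, (∫ y in Ici t, deriv v y) ∂μ) := by
        rw [covariance_eq_sub (X := fun t => c - u t) (Y := fun t => d - v t)
          ((memLp_const c).sub hu₂) ((memLp_const d).sub hv₂)]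
        simp only [Pi.mul_apply, hc, hd]
    _ = ∫ p : ℝ × ℝ, deriv u p.1 * deriv v p.2 * hoeffdingKernel μ p.1 p.2 := by
        rw [integral_setIntegral_Ici_mul_setIntegral_Ici μ hu₁ hv₁, integral_setIntegral_Ici μ hu₁,
          integral_setIntegral_Ici μ hv₁, ← integral_prod_mul, Measure.volume_eq_prod,
          ← integral_sub hmin hprod]
        simp only [hkernel]
    _ = ∫ x, ∫ y, deriv u x * deriv v y * hoeffdingKernel μ x y :=
        integral_prod _ ((hmin.sub hprod).congr (ae_of_all _ fun p => (hkernel p).symm))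

/-- Höffding's covariance representation on the real line: for a probability
measure `μ` with distribution function `F` and Höffding kernel
`H(x,y) = F(x∧y)(1 - F(x∨y))`, every pair of `C¹` functions with compactly
supported derivatives is square-integrable and
`cov_μ(u,v) = ∫∫ u'(x) v'(y) H(x,y) dx dy`. -/
theorem statement18 (μ : Measure ℝ) [IsProbabilityMeasure μ]
    (F : ℝ → ℝ) (hF : ∀ x, F x = (μ (Set.Iic x)).toReal)
    (H : ℝ → ℝ → ℝ) (hH : ∀ x y, H x y = F (min x y) * (1 - F (max x y)))
    (u v : ℝ → ℝ) (hu : ContDiff ℝ 1 u) (hv : ContDiff ℝ 1 v)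
    (hu' : HasCompactSupport (deriv u)) (hv' : HasCompactSupport (deriv v)) :
    MemLp u 2 μ ∧ MemLp v 2 μ ∧
      (∫ x, u x * v x ∂μ) - (∫ x, u x ∂μ) * (∫ x, v x ∂μ) =
        ∫ x : ℝ, ∫ y : ℝ, deriv u x * deriv v y * H x y := by
  have hu₂ := memLp_of_hasCompactSupport_deriv hu hu' μ 2
  have hv₂ := memLp_of_hasCompactSupport_deriv hv hv' μ 2
  obtain rfl : H = hoeffdingKernel μ := by
    funext x y
    rw [hH, hF, hF]
    rfl
  exact ⟨hu₂, hv₂, (covariance_eq_sub hu₂ hv₂).symm.trans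
    (covariance_eq_integral_integral_hoeffdingKernel μ hu hv hu' hv')⟩
end
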